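/- Define G_x(k) = ∑_{m≥1} P_x(X̃_{m-1} = k) (the expected number of visits to k, counting time 0). Then for k ≥ 2: if 1 ≤ x ≤ k, G_x(k) = 3(2k+3)/10; and if x > k, G_x(k) = 3h(k)(2k+3)/(10 h(x)), where h(y) = y(y+1)(y+2)(y+3)(2y+3). -/
import Mathlib


noncomputable def p (x : ℕ) : ℝ :=
  ((x : ℝ) + 4) * (2 * x + 5) / (3 * ((x : ℝ) + 2) * (2 * x + 3))

noncomputable def r (x : ℕ) : ℝ :=
  (x : ℝ) * ((x : ℝ) + 3) / (3 * ((x : ℝ) + 1) * ((x : ℝ) + 2))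

noncomputable def q (x : ℕ) : ℝ :=
  ((x : ℝ) - 1) * (2 * x + 1) / (3 * ((x : ℝ) + 1) * (2 * x + 3))

/-- `Pn m x y` is the `m`-step transition probability of the chain `X̃`. -/
noncomputable def Pn : ℕ → ℕ → ℕ → ℝ
  | 0, x, y => if x = y then 1 else 0
  | m + 1, x, y => p x * Pn m (x + 1) y + r x * Pn m x y + q x * Pn m (x - 1) y

noncomputable def h (y : ℝ) : ℝ := y * (y + 1) * (y + 2) * (y + 3) * (2 * y + 3)

noncomputable def g (k x : ℕ) : ℝ :=
  if x ≤ k then 3 * (2 * (k : ℝ) + 3) / 10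
  else 3 * (2 * (k : ℝ) + 3) / 10 * h k / h x

lemma p_pos (x : ℕ) : 0 < p x := by unfold p; positivity

lemma r_nonneg (x : ℕ) : 0 ≤ r x := by unfold r; positivity

lemma q_nonneg {x : ℕ} (hx : 1 ≤ x) : 0 ≤ q x := by
  have h1 : (1 : ℝ) ≤ (x : ℝ) := by exact_mod_cast hx
  unfold q
  apply div_nonneg
  · apply mul_nonneg
    · linarith
    · positivity
  · positivity

lemma q_one : q 1 = 0 := by unfold q; norm_num

lemma row_sum (x : ℕ) : p x + r x + q x = 1 := by
  unfold p r q
  have h1 : ((x:ℝ) + 1) ≠ 0 := by positivity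
  have h2 : ((x:ℝ) + 2) ≠ 0 := by positivity
  have h3 : (2*(x:ℝ) + 3) ≠ 0 := by positivity
  field_simp
  ring

lemma h_pos {x : ℕ} (hx : 1 ≤ x) : 0 < h x := by
  have h1 : (1 : ℝ) ≤ (x : ℝ) := by exact_mod_cast hx
  unfold h
  have : (0:ℝ) < x := by linarith
  positivity

lemma h_mono {x y : ℕ} (hxy : x ≤ y) : h x ≤ h y := by
  have h1 : (x : ℝ) ≤ (y : ℝ) := by exact_mod_cast hxy
  have h0 : (0 : ℝ) ≤ (x : ℝ) := by positivity
  unfold h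
  gcongr <;> linarith

lemma le_h {x : ℕ} (hx : 1 ≤ x) : (x : ℝ) ≤ h x := by
  have h1 : (1 : ℝ) ≤ (x : ℝ) := by exact_mod_cast hx
  have h2 : (1:ℝ) ≤ ((x:ℝ)+1)*((x:ℝ)+2)*((x:ℝ)+3)*(2*(x:ℝ)+3) := by
    nlinarith [mul_le_mul (by nlinarith : (1:ℝ) ≤ ((x:ℝ)+1)*((x:ℝ)+2)) (by nlinarith : (1:ℝ) ≤ ((x:ℝ)+3)*(2*(x:ℝ)+3)) zero_le_one (by positivity : (0:ℝ) ≤ ((x:ℝ)+1)*((x:ℝ)+2))]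
  have h3 := mul_le_mul_of_nonneg_left h2 (by linarith : (0:ℝ) ≤ (x:ℝ))
  unfold h
  nlinarith [h3]

lemma Pn_succ (m x y : ℕ) :
    Pn (m+1) x y = p x * Pn m (x + 1) y + r x * Pn m x y + q x * Pn m (x - 1) y := rfl

lemma Pn_supp : ∀ (m x y : ℕ), x + m < y → Pn m x y = 0 := by
  intro m
  induction m with
  | zero => intro x y hxy; simp only [Pn]; exact if_neg (by omega)
  | succ m ih =>
    intro x y hxy
    rw [Pn_succ, ih (x+1) y (by omega), ih x y (by omega), ih (x-1) y (by omega)]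
    ring

lemma Pn_nonneg : ∀ (m x y : ℕ), 1 ≤ x → 0 ≤ Pn m x y := by
  intro m
  induction m with
  | zero => intro x y _; simp only [Pn]; split <;> norm_num
  | succ m ih =>
    intro x y hx
    rw [Pn_succ]
    have t1 : 0 ≤ p x * Pn m (x+1) y := mul_nonneg (p_pos x).le (ih (x+1) y (by omega))
    have t2 : 0 ≤ r x * Pn m x y := mul_nonneg (r_nonneg x) (ih x y hx)
    have t3 : 0 ≤ q x * Pn m (x-1) y := by
      rcases Nat.eq_or_lt_of_le hx with h1 | h1
      · rw [← h1, q_one]; simp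
      · exact mul_nonneg (q_nonneg hx) (ih (x-1) y (by omega))
    linarith

lemma Pn_target_zero : ∀ (m x : ℕ), 1 ≤ x → Pn m x 0 = 0 := by
  intro m
  induction m with
  | zero => intro x hx; simp only [Pn]; exact if_neg (by omega)
  | succ m ih =>
    intro x hx
    rw [Pn_succ, ih (x+1) (by omega), ih x hx]
    rcases Nat.eq_or_lt_of_le hx with h1 | h1
    · rw [← h1, q_one]; ring
    · rw [ih (x-1) (by omega)]; ring

lemma Pn_sum_ext (m x n : ℕ) (hn : x + m + 1 ≤ n) :
    ∑ y ∈ Finset.range n, Pn m x y = ∑ y ∈ Finset.range (x + m + 1), Pn m x y := by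
  symm
  apply Finset.sum_subset
  · exact Finset.range_subset_range.2 hn
  · intro y _ hy
    exact Pn_supp m x y (by simp [Finset.mem_range] at hy; omega)

lemma Pn_row_sum : ∀ (m x : ℕ), ∑ y ∈ Finset.range (x + m + 1), Pn m x y = 1 := by
  intro m
  induction m with
  | zero =>
    intro x
    simp only [Pn]
    rw [Finset.sum_ite_eq]
    simp
  | succ m ih =>
    intro x
    have e1 : ∑ y ∈ Finset.range (x + (m+1) + 1), Pn m (x+1) y = 1 := by
      rw [show x + (m+1) + 1 = (x+1) + m + 1 by omega]; exact ih (x+1)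
    have e2 : ∑ y ∈ Finset.range (x + (m+1) + 1), Pn m x y = 1 := by
      rw [Pn_sum_ext m x _ (by omega)]; exact ih x
    have e3 : ∑ y ∈ Finset.range (x + (m+1) + 1), Pn m (x-1) y = 1 := by
      rw [Pn_sum_ext m (x-1) _ (by omega)]; exact ih (x-1)
    simp only [Pn_succ]
    rw [Finset.sum_add_distrib, Finset.sum_add_distrib, ← Finset.mul_sum, ← Finset.mul_sum,
      ← Finset.mul_sum, e1, e2, e3]
    simpa using row_sum x

lemma g_nonneg (k x : ℕ) : 0 ≤ g k x := by
  unfold g h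
  split <;> positivity

lemma g_le (k x : ℕ) (hk : 1 ≤ k) : g k x ≤ 3 * (2 * (k : ℝ) + 3) / 10 := by
  unfold g
  split
  · exact le_refl _
  · rename_i hx
    have h1 : 0 < h x := h_pos (x := x) (by omega)
    have h2 : 0 < h k := h_pos hk
    have h3 : h (k:ℝ) ≤ h (x:ℝ) := h_mono (by omega)
    rw [div_le_iff₀ h1]
    have hC : (0:ℝ) ≤ 3 * (2*(k:ℝ)+3)/10 := by positivity
    nlinarith [mul_le_mul_of_nonneg_left h3 hC]

lemma g_fix (k x : ℕ) (hk : 2 ≤ k) (hx : 1 ≤ x) :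
    g k x = (if x = k then 1 else 0) + p x * g k (x+1) + r x * g k x + q x * g k (x-1) := by
  obtain ⟨z, rfl⟩ : ∃ z, x = z + 1 := ⟨x - 1, by omega⟩
  rcases lt_trichotomy (z+1) k with hlt | heq | hgt
  · -- x < k : constant region
    have e1 : g k (z+1) = 3 * (2 * (k : ℝ) + 3) / 10 := if_pos (by omega)
    have e2 : g k (z+1+1) = 3 * (2 * (k : ℝ) + 3) / 10 := if_pos (by omega)
    have e3 : g k (z+1-1) = 3 * (2 * (k : ℝ) + 3) / 10 := if_pos (by omega)
    rw [e1, e2, e3, if_neg (by omega)]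
    have hrow := row_sum (z+1)
    linear_combination (-(3 * (2 * (k : ℝ) + 3) / 10)) * hrow
  · -- x = k
    subst heq
    have e1 : g (z+1) (z+1) = 3 * (2 * ((z:ℝ)+1) + 3) / 10 := by
      rw [g, if_pos le_rfl]; push_cast; ring
    have e2 : g (z+1) (z+1+1) =
        3 * (2 * ((z:ℝ)+1) + 3) / 10 * h ((z:ℝ)+1) / h ((z:ℝ)+2) := by
      rw [g, if_neg (by omega)]; push_cast; ring_nf
    have e3 : g (z+1) (z+1-1) = 3 * (2 * ((z:ℝ)+1) + 3) / 10 := by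
      rw [g, if_pos (by omega)]; push_cast; ring
    rw [e1, e2, e3, if_pos rfl]
    unfold p r q h
    have c1 : ((z:ℝ)+1+1) ≠ 0 := by positivity
    have c2 : ((z:ℝ)+1+2) ≠ 0 := by positivity
    have c3 : (2*((z:ℝ)+1)+3) ≠ 0 := by positivity
    have c4 : ((z:ℝ)+2) ≠ 0 := by positivity
    have c5 : ((z:ℝ)+2+1) ≠ 0 := by positivity
    have c6 : ((z:ℝ)+2+2) ≠ 0 := by positivity
    have c7 : ((z:ℝ)+2+3) ≠ 0 := by positivity
    have c8 : (2*((z:ℝ)+2)+3) ≠ 0 := by positivity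
    push_cast
    field_simp
    ring
  · -- x > k
    rcases Nat.eq_or_lt_of_le hgt with heq1 | hgt1
    · -- x = k + 1
      obtain rfl : k = z := by omega
      have e1 : g k (k+1) = 3 * (2 * (k:ℝ) + 3) / 10 * h (k:ℝ) / h ((k:ℝ)+1) := by
        rw [g, if_neg (by omega)]; push_cast; ring_nf
      have e2 : g k (k+1+1) = 3 * (2 * (k:ℝ) + 3) / 10 * h (k:ℝ) / h ((k:ℝ)+2) := by
        rw [g, if_neg (by omega)]; push_cast; ring_nf
      have e3 : g k (k+1-1) = 3 * (2 * (k:ℝ) + 3) / 10 := by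
        rw [g, if_pos (by omega)]
      rw [e1, e2, e3, if_neg (by omega)]
      unfold p r q h
      have d0 : (0:ℝ) ≤ (k:ℝ) := by positivity
      have c1 : ((k:ℝ)+1) ≠ 0 := by positivity
      have c2 : ((k:ℝ)+2) ≠ 0 := by positivity
      have c3 : ((k:ℝ)+3) ≠ 0 := by positivity
      have c4 : ((k:ℝ)+4) ≠ 0 := by positivity
      have c5 : ((k:ℝ)+5) ≠ 0 := by positivity
      have c6 : (2*(k:ℝ)+3) ≠ 0 := by positivity
      have c7 : (2*(k:ℝ)+5) ≠ 0 := by positivity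
      have c8 : (2*(k:ℝ)+7) ≠ 0 := by positivity
      push_cast
      field_simp
      ring
    · -- x ≥ k + 2, all three in the h regime
      have hz : k + 1 ≤ z := by omega
      have hz1 : (1:ℝ) ≤ (z:ℝ) := by exact_mod_cast (by omega : 1 ≤ z)
      have e1 : g k (z+1) = 3 * (2 * (k:ℝ) + 3) / 10 * h (k:ℝ) / h ((z:ℝ)+1) := by
        rw [g, if_neg (by omega)]; push_cast; ring_nf
      have e2 : g k (z+1+1) = 3 * (2 * (k:ℝ) + 3) / 10 * h (k:ℝ) / h ((z:ℝ)+2) := by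
        rw [g, if_neg (by omega)]; push_cast; ring_nf
      have e3 : g k (z+1-1) = 3 * (2 * (k:ℝ) + 3) / 10 * h (k:ℝ) / h ((z:ℝ)) := by
        rw [g, if_neg (by omega)]; push_cast; ring_nf
      rw [e1, e2, e3, if_neg (by omega)]
      unfold p r q h
      have d0 : (0:ℝ) < (z:ℝ) := by linarith
      have c0 : ((z:ℝ)) ≠ 0 := by positivity
      have c1 : ((z:ℝ)+1) ≠ 0 := by positivity
      have c2 : ((z:ℝ)+2) ≠ 0 := by positivity
      have c3 : ((z:ℝ)+3) ≠ 0 := by positivity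
      have c4 : ((z:ℝ)+4) ≠ 0 := by positivity
      have c5 : ((z:ℝ)+5) ≠ 0 := by positivity
      have c6 : (2*(z:ℝ)+3) ≠ 0 := by positivity
      have c7 : (2*(z:ℝ)+5) ≠ 0 := by positivity
      have c8 : (2*(z:ℝ)+7) ≠ 0 := by positivity
      push_cast
      field_simp
      ring

lemma S_step (N x k : ℕ) :
    ∑ m ∈ Finset.range (N+1), Pn m x k =
      (if x = k then 1 else 0) + p x * ∑ m ∈ Finset.range N, Pn m (x+1) k
        + r x * ∑ m ∈ Finset.range N, Pn m x k
        + q x * ∑ m ∈ Finset.range N, Pn m (x-1) k := by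
  rw [Finset.sum_range_succ']
  simp only [Pn_succ]
  rw [Finset.sum_add_distrib, Finset.sum_add_distrib, ← Finset.mul_sum, ← Finset.mul_sum,
    ← Finset.mul_sum]
  show _ + Pn 0 x k = _
  simp only [Pn]
  ring

lemma E_step (N x k : ℕ) :
    ∑ y ∈ Finset.range (x+(N+1)+1), Pn (N+1) x y * g k y =
      p x * ∑ y ∈ Finset.range ((x+1)+N+1), Pn N (x+1) y * g k y
        + r x * ∑ y ∈ Finset.range (x+N+1), Pn N x y * g k y
        + q x * ∑ y ∈ Finset.range ((x-1)+N+1), Pn N (x-1) y * g k y := by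
  have pad : ∀ w : ℕ, w + N + 1 ≤ x + (N+1) + 1 →
      ∑ y ∈ Finset.range (x+(N+1)+1), Pn N w y * g k y
        = ∑ y ∈ Finset.range (w+N+1), Pn N w y * g k y := by
    intro w hw
    symm
    apply Finset.sum_subset (Finset.range_subset_range.2 hw)
    intro y _ hy
    rw [Pn_supp N w y (by simp [Finset.mem_range] at hy; omega)]
    ring
  rw [← pad (x+1) (by omega), ← pad x (by omega), ← pad (x-1) (by omega)]
  simp only [Pn_succ]
  rw [Finset.mul_sum, Finset.mul_sum, Finset.mul_sum, ← Finset.sum_add_distrib,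
    ← Finset.sum_add_distrib]
  apply Finset.sum_congr rfl
  intro y _
  ring

lemma partial_le (k : ℕ) (hk : 2 ≤ k) :
    ∀ (N x : ℕ), 1 ≤ x → ∑ m ∈ Finset.range N, Pn m x k ≤ g k x := by
  intro N
  induction N with
  | zero => intro x hx; simpa using g_nonneg k x
  | succ N ih =>
    intro x hx
    rw [S_step]
    have t1 : p x * ∑ m ∈ Finset.range N, Pn m (x+1) k ≤ p x * g k (x+1) :=
      mul_le_mul_of_nonneg_left (ih (x+1) (by omega)) (p_pos x).le
    have t2 : r x * ∑ m ∈ Finset.range N, Pn m x k ≤ r x * g k x :=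
      mul_le_mul_of_nonneg_left (ih x hx) (r_nonneg x)
    have t3 : q x * ∑ m ∈ Finset.range N, Pn m (x-1) k ≤ q x * g k (x-1) := by
      rcases Nat.eq_or_lt_of_le hx with h1 | h1
      · rw [← h1, q_one]; simp
      · exact mul_le_mul_of_nonneg_left (ih (x-1) (by omega)) (q_nonneg hx)
    have := g_fix k x hk hx
    linarith

lemma Pn_summable (k : ℕ) (hk : 2 ≤ k) (x : ℕ) (hx : 1 ≤ x) :
    Summable (fun m => Pn m x k) :=
  summable_of_sum_range_le (fun m => Pn_nonneg m x k hx) (fun N => partial_le k hk N x hx)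

lemma decomp (k : ℕ) (hk : 2 ≤ k) :
    ∀ (N x : ℕ), 1 ≤ x →
      g k x = (∑ m ∈ Finset.range N, Pn m x k)
        + ∑ y ∈ Finset.range (x + N + 1), Pn N x y * g k y := by
  intro N
  induction N with
  | zero =>
    intro x hx
    simp only [Finset.range_zero, Finset.sum_empty, zero_add]
    have : ∀ y ∈ Finset.range (x + 0 + 1), Pn 0 x y * g k y
        = if x = y then g k y else 0 := by
      intro y _
      simp only [Pn]
      split <;> simp
    rw [Finset.sum_congr rfl this, Finset.sum_ite_eq]
    simp
  | succ N ih =>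
    intro x hx
    rw [S_step, E_step]
    rcases Nat.eq_or_lt_of_le hx with h1 | h1
    · -- x = 1
      rw [← h1] at *
      have i2 := ih 2 (by omega)
      have i1 := ih 1 (by omega)
      rw [q_one]
      have hfix := g_fix k 1 hk (by omega)
      rw [q_one] at hfix
      show g k 1 = _ + p 1 * _ + r 1 * _ + 0 * _ + (p 1 * _ + r 1 * _ + 0 * _)
      norm_num at hfix ⊢
      rw [hfix, i2, i1]
      ring
    · -- x ≥ 2
      have i2 := ih (x+1) (by omega)
      have i1 := ih x hx
      have i0 := ih (x-1) (by omega)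
      have hfix := g_fix k x hk hx
      rw [hfix, i2, i1, i0]
      ring

lemma cmp_one : ∀ (N x : ℕ), 1 ≤ x → p 1 * Pn N x 1 ≤ Pn (N+1) x 2 := by
  intro N
  induction N with
  | zero =>
    intro x hx
    by_cases h1 : x = 1
    · subst h1
      rw [Pn_succ]
      simp only [Pn]
      norm_num
    · have : Pn 0 x 1 = 0 := by simp only [Pn]; exact if_neg (by omega)
      rw [this, mul_zero]
      exact Pn_nonneg (0+1) x 2 hx
  | succ N ih =>
    intro x hx
    rw [Pn_succ, Pn_succ, mul_add, mul_add]
    have t1 : p 1 * (p x * Pn N (x+1) 1) ≤ p x * Pn (N+1) (x+1) 2 := by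
      rw [show p 1 * (p x * Pn N (x+1) 1) = p x * (p 1 * Pn N (x+1) 1) by ring]
      exact mul_le_mul_of_nonneg_left (ih (x+1) (by omega)) (p_pos x).le
    have t2 : p 1 * (r x * Pn N x 1) ≤ r x * Pn (N+1) x 2 := by
      rw [show p 1 * (r x * Pn N x 1) = r x * (p 1 * Pn N x 1) by ring]
      exact mul_le_mul_of_nonneg_left (ih x hx) (r_nonneg x)
    have t3 : p 1 * (q x * Pn N (x-1) 1) ≤ q x * Pn (N+1) (x-1) 2 := by
      rcases Nat.eq_or_lt_of_le hx with h1 | h1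
      · rw [← h1, q_one]; simp
      · rw [show p 1 * (q x * Pn N (x-1) 1) = q x * (p 1 * Pn N (x-1) 1) by ring]
        exact mul_le_mul_of_nonneg_left (ih (x-1) (by omega)) (q_nonneg hx)
    linarith

lemma tendsto_Pn_zero (x y : ℕ) (hx : 1 ≤ x) :
    Filter.Tendsto (fun N => Pn N x y) Filter.atTop (nhds 0) := by
  rcases Nat.lt_or_ge y 2 with hy | hy
  · interval_cases y
    · -- y = 0
      have : (fun N => Pn N x 0) = fun _ => (0:ℝ) := by
        funext N; exact Pn_target_zero N x hx
      rw [this]; exact tendsto_const_nhds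
    · -- y = 1
      have h2 : Filter.Tendsto (fun N => Pn N x 2) Filter.atTop (nhds 0) :=
        (Pn_summable 2 le_rfl x hx).tendsto_atTop_zero
      have h2' : Filter.Tendsto (fun N => Pn (N+1) x 2) Filter.atTop (nhds 0) :=
        h2.comp (Filter.tendsto_add_atTop_nat 1)
      have h2'' : Filter.Tendsto (fun N => (p 1)⁻¹ * Pn (N+1) x 2) Filter.atTop (nhds 0) := by
        simpa using h2'.const_mul (p 1)⁻¹
      apply squeeze_zero (fun N => Pn_nonneg N x 1 hx) _ h2''
      intro N
      have h3 := mul_le_mul_of_nonneg_left (cmp_one N x hx) (inv_nonneg.2 (p_pos 1).le)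
      rwa [← mul_assoc, inv_mul_cancel₀ (p_pos 1).ne', one_mul] at h3
  · exact (Pn_summable y hy x hx).tendsto_atTop_zero

lemma E_tendsto (k : ℕ) (hk : 2 ≤ k) (x : ℕ) (hx : 1 ≤ x) :
    Filter.Tendsto (fun N => ∑ y ∈ Finset.range (x+N+1), Pn N x y * g k y)
      Filter.atTop (nhds 0) := by
  have hC : (0:ℝ) < 3 * (2 * (k : ℝ) + 3) / 10 := by positivity
  set C : ℝ := 3 * (2 * (k : ℝ) + 3) / 10 with hCdef
  have hhk : 0 < h k := h_pos (by omega)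
  rw [Metric.tendsto_atTop]
  intro ε hε
  obtain ⟨M0, hM0⟩ := exists_nat_gt (2 * C * h k / ε)
  set M := max M0 (k+1) with hMdef
  have tail : ∀ y : ℕ, M < y → g k y ≤ ε/2 := by
    intro y hy
    have hyk : ¬ y ≤ k := by omega
    have hy1 : 1 ≤ y := by omega
    have hyh : 0 < h y := h_pos hy1
    have e : g k y = C * h k / h y := by rw [g, if_neg hyk]
    rw [e, div_le_iff₀ hyh]
    have hM0y : (M0 : ℝ) ≤ (y : ℝ) := by exact_mod_cast (by omega : M0 ≤ y)
    have hM0' : 2 * C * h k < ε * M0 := by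
      rw [div_lt_iff₀ hε] at hM0; linarith
    have hyhy := le_h hy1
    nlinarith
  have hT : Filter.Tendsto (fun N => ∑ y ∈ Finset.range (M+1), Pn N x y)
      Filter.atTop (nhds 0) := by
    have := tendsto_finset_sum (Finset.range (M+1))
      (fun y _ => tendsto_Pn_zero x y hx)
    simpa using this
  rw [Metric.tendsto_atTop] at hT
  obtain ⟨N₀, hN₀⟩ := hT (ε / (2 * (C+1))) (by positivity)
  refine ⟨N₀, fun N hN => ?_⟩
  have hTN := hN₀ N hN
  rw [Real.dist_eq, sub_zero] at hTN ⊢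
  set T : ℝ := ∑ y ∈ Finset.range (M+1), Pn N x y with hTdef
  have hTnn : 0 ≤ T := Finset.sum_nonneg fun y _ => Pn_nonneg N x y hx
  rw [abs_of_nonneg hTnn] at hTN
  have hEnn : 0 ≤ ∑ y ∈ Finset.range (x+N+1), Pn N x y * g k y :=
    Finset.sum_nonneg fun y _ => mul_nonneg (Pn_nonneg N x y hx) (g_nonneg k y)
  rw [abs_of_nonneg hEnn]
  have step1 : ∑ y ∈ Finset.range (x+N+1), Pn N x y * g k y
      ≤ ∑ y ∈ Finset.range (x+N+1),
          (if y ≤ M then Pn N x y * C else Pn N x y * (ε/2)) := by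
    apply Finset.sum_le_sum
    intro y _
    split_ifs with hyM
    · exact mul_le_mul_of_nonneg_left (g_le k y (by omega)) (Pn_nonneg N x y hx)
    · exact mul_le_mul_of_nonneg_left (tail y (by omega)) (Pn_nonneg N x y hx)
  rw [Finset.sum_ite, ← Finset.sum_mul, ← Finset.sum_mul] at step1
  have step2 : ∑ y ∈ (Finset.range (x+N+1)).filter (fun y => y ≤ M), Pn N x y ≤ T := by
    apply Finset.sum_le_sum_of_subset_of_nonneg
    · intro y hy
      simp only [Finset.mem_filter, Finset.mem_range] at hy
      exact Finset.mem_range.2 (by omega)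
    · intro y _ _; exact Pn_nonneg N x y hx
  have step3 : ∑ y ∈ (Finset.range (x+N+1)).filter (fun y => ¬ y ≤ M), Pn N x y ≤ 1 := by
    have := Finset.sum_le_sum_of_subset_of_nonneg
      (Finset.filter_subset (fun y => ¬ y ≤ M) (Finset.range (x+N+1)))
      (fun y _ _ => Pn_nonneg N x y hx)
    rw [Pn_row_sum N x] at this
    exact this
  have s2nn : 0 ≤ ∑ y ∈ (Finset.range (x+N+1)).filter (fun y => ¬ y ≤ M), Pn N x y :=
    Finset.sum_nonneg fun y _ => Pn_nonneg N x y hx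
  have s1nn : 0 ≤ ∑ y ∈ (Finset.range (x+N+1)).filter (fun y => y ≤ M), Pn N x y :=
    Finset.sum_nonneg fun y _ => Pn_nonneg N x y hx
  have hTN' : T < ε / (2 * (C+1)) := hTN
  calc ∑ y ∈ Finset.range (x+N+1), Pn N x y * g k y
      ≤ (∑ y ∈ (Finset.range (x+N+1)).filter (fun y => y ≤ M), Pn N x y) * C
        + (∑ y ∈ (Finset.range (x+N+1)).filter (fun y => ¬ y ≤ M), Pn N x y) * (ε/2) :=
        step1
    _ < ε := by
        set d : ℝ := ε / (2 * (C+1)) with hddef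
        have hq : d * (2 * (C+1)) = ε := div_mul_cancel₀ ε (by positivity)
        have u1 := mul_le_mul_of_nonneg_right step2 hC.le
        have u2 := mul_lt_mul_of_pos_right hTN' hC
        have u3 := mul_le_mul_of_nonneg_right step3 (by positivity : (0:ℝ) ≤ ε/2)
        have hd0 : 0 ≤ d := le_trans hTnn hTN'.le
        nlinarith [u1, u2, u3, hq, hd0]

lemma green (k : ℕ) (hk : 2 ≤ k) (x : ℕ) (hx : 1 ≤ x) :
    ∑' m : ℕ, Pn m x k = g k x := by
  have hsum := (Pn_summable k hk x hx).hasSum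
  have h1 := hsum.tendsto_sum_nat
  have h2 : Filter.Tendsto (fun N => ∑ m ∈ Finset.range N, Pn m x k)
      Filter.atTop (nhds (g k x)) := by
    have he : (fun N => ∑ m ∈ Finset.range N, Pn m x k)
        = fun N => g k x - ∑ y ∈ Finset.range (x+N+1), Pn N x y * g k y := by
      funext N
      have := decomp k hk N x hx
      linarith
    rw [he]
    simpa using tendsto_const_nhds.sub (E_tendsto k hk x hx)
  exact tendsto_nhds_unique h1 h2


/-- Green's function of `X̃`: `G_x(k) = ∑_{m≥1} P_x(X̃_{m-1}=k)` equals `3(2k+3)/10`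
for `1 ≤ x ≤ k`, and `3h(k)(2k+3)/(10h(x))` for `x > k` (here `k ≥ 2`). -/
theorem stmt_7 (k : ℕ) (hk : 2 ≤ k) :
    (∀ x : ℕ, 1 ≤ x → x ≤ k →
      ∑' m : ℕ, Pn m x k = 3 * (2 * (k : ℝ) + 3) / 10) ∧
    (∀ x : ℕ, k < x →
      ∑' m : ℕ, Pn m x k = 3 * h k * (2 * (k : ℝ) + 3) / (10 * h x)) := by
  constructor
  · intro x hx1 hxk
    rw [green k hk x hx1, g, if_pos hxk]
  · intro x hxk
    rw [green k hk x (by omega), g, if_neg (by omega)]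
    have hx : 0 < h x := h_pos (by omega)
    field_simp
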